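/- arXiv:1111.0871 — 2 statements merged into one kernel-verified Lean document; each statement's English description precedes it below -/
import Mathlib

section
/- Let T be a minimal G-tree and let ℰ be a nonempty G-invariant set of oriented edges of T. Then there is no vertex v of T such that every edge of ℰ is oriented away from v (i.e., for every vertex v there exists an edge of ℰ oriented toward v). -/
/-- A `G`-tree is minimal if it has no proper nonempty `G`-invariant subtree
(nonempty convex invariant vertex set). -/
def IsMinimalGTree {V : Type*} (T : SimpleGraph V) (G : Type*) [Group G]
    [MulAction G V] : Prop :=
  ∀ A : Set V, A.Nonempty →
    (∀ a b c : V, a ∈ A → c ∈ A → T.dist a b + T.dist b c = T.dist a c → b ∈ A) →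
    (∀ (g : G) (x : V), x ∈ A → g • x ∈ A) →
    A = Set.univ

/-- The oriented edge `(a, b)` is oriented toward the vertex `v`: the geodesic
from `v` to `a` passes through `b`, i.e. `d(v, b) + 1 = d(v, a)`. -/
def EdgeTowardVertex {V : Type*} (T : SimpleGraph V) (v a b : V) : Prop :=
  T.dist v b + 1 = T.dist v a

/-
Let `A` be the set of vertices from which every edge of `ℰ` points away. In a tree the vertices
from which a given edge points away form a half-tree, which is geodesically convex because every
geodesic between the two sides of an edge crosses it; hence `A` is convex, and it is `G`-invariant
because `G` acts by isometries. If some vertex lay in `A`, minimality would force `A` to be the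
whole tree, yet the terminal vertex of an edge of `ℰ` is not in `A`.
-/

namespace SimpleGraph

variable {V : Type*} {T : SimpleGraph V}

def IsGeodesicallyConvex (T : SimpleGraph V) (A : Set V) : Prop :=
  ∀ a b c : V, a ∈ A → c ∈ A → T.dist a b + T.dist b c = T.dist a c → b ∈ A

lemma isGeodesicallyConvex_biInter {ι : Type*} {I : Set ι} {A : ι → Set V}
    (hA : ∀ i ∈ I, T.IsGeodesicallyConvex (A i)) :
    T.IsGeodesicallyConvex (⋂ i ∈ I, A i) := by
  intro a b c ha hc habc
  simp only [Set.mem_iInter₂] at ha hc ⊢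
  exact fun i hi => hA i hi a b c (ha i hi) (hc i hi) habc

lemma Walk.dist_add_dist_le_of_mem_support {a b u : V} (p : T.Walk a b)
    (hp : p.length = T.dist a b) (hu : u ∈ p.support) :
    T.dist a u + T.dist u b ≤ T.dist a b := by
  classical
  have hlen : (p.takeUntil u hu).length + (p.dropUntil u hu).length = p.length := by
    rw [← length_append, p.take_spec hu]
  have := dist_le (p.takeUntil u hu)
  have := dist_le (p.dropUntil u hu)
  omega

lemma Reachable.dist_map_le {W : Type*} {T' : SimpleGraph W} (f : T →g T') {x y : V}
    (h : T.Reachable x y) : T'.dist (f x) (f y) ≤ T.dist x y := by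
  obtain ⟨p, hp⟩ := h.exists_walk_length_eq_dist
  simpa only [Walk.length_map, hp] using dist_le (p.map f)

lemma Connected.dist_smul_smul {G : Type*} [Group G] [MulAction G V] (hT : T.Connected)
    (hact : ∀ (g : G) (x y : V), T.Adj x y → T.Adj (g • x) (g • y)) (g : G) (x y : V) :
    T.dist (g • x) (g • y) = T.dist x y := by
  let f : G → (T →g T) := fun g => ⟨(g • ·), hact g _ _⟩
  refine le_antisymm ((hT x y).dist_map_le (f g)) ?_
  simpa [f] using (hT (g • x) (g • y)).dist_map_le (f g⁻¹)

lemma IsTree.length_eq_dist_of_isPath (hT : T.IsTree) {a b : V} (p : T.Walk a b)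
    (hp : p.IsPath) : p.length = T.dist a b := by
  obtain ⟨q, hq, hql⟩ := hT.connected.exists_path_of_dist a b
  rw [(hT.existsUnique_path a b).unique hp hq, hql]

lemma IsTree.edgeTowardVertex_or_edgeTowardVertex_swap (hT : T.IsTree) (v : V) {x y : V}
    (hxy : T.Adj x y) : EdgeTowardVertex T v x y ∨ EdgeTowardVertex T v y x := by
  unfold EdgeTowardVertex
  rcases hT.dist_eq_dist_add_one_of_adj v hxy with h | h
  · exact .inl h.symm
  · exact .inr h.symm

lemma not_edgeTowardVertex_self (v b : V) : ¬EdgeTowardVertex T v v b := by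
  simp [EdgeTowardVertex]

lemma Connected.edgeTowardVertex_smul_iff {G : Type*} [Group G] [MulAction G V]
    (hT : T.Connected) (hact : ∀ (g : G) (x y : V), T.Adj x y → T.Adj (g • x) (g • y))
    (g : G) (v a b : V) :
    EdgeTowardVertex T (g • v) (g • a) (g • b) ↔ EdgeTowardVertex T v a b := by
  simp only [EdgeTowardVertex, hT.dist_smul_smul hact]

lemma IsTree.dist_eq_of_adj_of_sides (hT : T.IsTree) {x y a b : V} (hxy : T.Adj x y)
    (ha : T.dist a x + 1 = T.dist a y) (hb : T.dist b y + 1 = T.dist b x) :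
    T.dist a b = T.dist a x + 1 + T.dist y b := by
  have hconn := hT.connected
  obtain ⟨p, hp, hpl⟩ := hconn.exists_path_of_dist a x
  obtain ⟨q, hq, hql⟩ := hconn.exists_path_of_dist y b
  -- a common vertex `u` of the two geodesics would be closer to `y` than `a` is, and closer to
  -- `x` than `b` is
  have hdisj : ∀ u ∈ p.support, u ∉ q.support := by
    intro u hup huq
    have := p.dist_add_dist_le_of_mem_support hpl hup
    have := q.dist_add_dist_le_of_mem_support hql huq
    have := hconn.dist_triangle (u := a) (v := u) (w := y)
    have := hconn.dist_triangle (u := b) (v := u) (w := x)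
    have : T.dist u b = T.dist b u := dist_comm
    have : T.dist y b = T.dist b y := dist_comm
    have : T.dist y u = T.dist u y := dist_comm
    omega
  have hpath : (p.append (.cons hxy q)).IsPath := by
    rw [Walk.isPath_def, Walk.support_append, Walk.support_cons, List.tail_cons]
    exact hp.support_nodup.append hq.support_nodup (List.disjoint_left.mpr hdisj)
  have := hT.length_eq_dist_of_isPath _ hpath
  rw [Walk.length_append, Walk.length_cons] at this
  omega

lemma IsTree.isGeodesicallyConvex_setOf_edgeTowardVertex (hT : T.IsTree) {x y : V}
    (hxy : T.Adj x y) : T.IsGeodesicallyConvex {w | EdgeTowardVertex T w x y} := by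
  intro a b c (ha : T.dist a y + 1 = T.dist a x) (hc : T.dist c y + 1 = T.dist c x) habc
  refine (hT.edgeTowardVertex_or_edgeTowardVertex_swap b hxy).resolve_right fun hb => ?_
  have hab := hT.dist_eq_of_adj_of_sides hxy hb ha
  have hcb := hT.dist_eq_of_adj_of_sides hxy hb hc
  have := hT.connected.dist_triangle (u := a) (v := y) (w := c)
  have : T.dist a b = T.dist b a := dist_comm
  have : T.dist y a = T.dist a y := dist_comm
  omega

end SimpleGraph

open SimpleGraph in
theorem stmt5_general {V : Type*} (T : SimpleGraph V) (hT : T.IsTree)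
    (G : Type*) [Group G] [MulAction G V]
    (hact : ∀ (g : G) (x y : V), T.Adj x y → T.Adj (g • x) (g • y))
    (hmin : IsMinimalGTree T G)
    (ℰ : Set (V × V)) (hedges : ∀ e ∈ ℰ, T.Adj e.1 e.2) (hne : ℰ.Nonempty)
    (hinv : ∀ (g : G), ∀ e ∈ ℰ, (g • e.1, g • e.2) ∈ ℰ) :
    ∀ v : V, ∃ e ∈ ℰ, EdgeTowardVertex T v e.1 e.2 := by
  intro v
  by_contra! hcon
  set A : Set V := ⋂ e ∈ ℰ, {w | EdgeTowardVertex T w e.2 e.1}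
  have hvA : v ∈ A := Set.mem_iInter₂.2 fun e he =>
    (hT.edgeTowardVertex_or_edgeTowardVertex_swap v (hedges e he)).resolve_left (hcon e he)
  have hAconv : T.IsGeodesicallyConvex A := isGeodesicallyConvex_biInter fun e he =>
    hT.isGeodesicallyConvex_setOf_edgeTowardVertex (hedges e he).symm
  have hAinv : ∀ (g : G) (w : V), w ∈ A → g • w ∈ A := by
    intro g w hw
    refine Set.mem_iInter₂.2 fun e he => ?_
    have : EdgeTowardVertex T w (g⁻¹ • e.2) (g⁻¹ • e.1) :=
      Set.mem_iInter₂.1 hw _ (hinv g⁻¹ e he)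
    rwa [← hT.connected.edgeTowardVertex_smul_iff hact g, smul_inv_smul, smul_inv_smul] at this
  obtain ⟨e, he⟩ := hne
  have heA : e.2 ∈ A := (hmin A ⟨v, hvA⟩ hAconv hAinv).symm ▸ Set.mem_univ _
  exact not_edgeTowardVertex_self e.2 e.1 (Set.mem_iInter₂.1 heA e he)

/-- Let `T` be a minimal `G`-tree and `ℰ` a nonempty `G`-invariant
set of oriented edges.  Then there is no vertex from which every edge of `ℰ`
points away; equivalently, every vertex `v` has some edge of `ℰ` oriented
toward it. -/
theorem stmt5 {V : Type*} (T : SimpleGraph V) (hT : T.IsTree) (hinf : Infinite V)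
    (G : Type*) [Group G] [MulAction G V]
    (hact : ∀ (g : G) (x y : V), T.Adj x y → T.Adj (g • x) (g • y))
    (hnoinv : ∀ (g : G) (x y : V), T.Adj x y → ¬(g • x = y ∧ g • y = x))
    (hmin : IsMinimalGTree T G)
    (ℰ : Set (V × V)) (hedges : ∀ e ∈ ℰ, T.Adj e.1 e.2) (hne : ℰ.Nonempty)
    (hinv : ∀ (g : G), ∀ e ∈ ℰ, (g • e.1, g • e.2) ∈ ℰ) :
    ∀ v : V, ∃ e ∈ ℰ, EdgeTowardVertex T v e.1 e.2 :=
  stmt5_general T hT G hact hmin ℰ hedges hne hinv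
end

section
/- Let q : T̃ → T be a locally surjective morphism of trees, let E be an end of T with q^{-1}(E) a singleton, let τ be a geodesic ray in T representing E, and let r ∈ ℝ. Then the preimage q^{-1}(HB_r(τ)) of the horoball HB_r(τ) about E is a connected subtree of T̃. -/
/-! A vertex `v` with `β_τ(v) ≥ r` is the start of a geodesic ray that stays in `HB_r(τ)` and
eventually runs along `τ`: go from `v` to a point `τ N` at which the approximants
`n - d(τ n, v)` of the Busemann function are maximal, then follow `τ`; maximality makes the
concatenation geodesic. By local surjectivity this ray lifts to a ray from any preimage of `v`,
and the lift represents an end in `q⁻¹(E)`. For `w₁, w₂ ∈ q⁻¹(HB_r(τ))` the two lifted rays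
are equivalent because `q⁻¹(E)` is a singleton, so they meet, and `w₁, w₂` are joined by a walk
inside `q⁻¹(HB_r(τ))`. In a tree every vertex between `w₁` and `w₂` lies on that walk. -/

/-- A geodesic ray in a tree: an injective sequence of consecutively adjacent
vertices. -/
def IsGeodRay {V : Type*} (T : SimpleGraph V) (τ : ℕ → V) : Prop :=
  (∀ n, T.Adj (τ n) (τ (n + 1))) ∧ Function.Injective τ

/-- Two geodesic rays represent the same end iff they eventually coincide. -/
def RayEquiv {V : Type*} (τ σ : ℕ → V) : Prop :=
  ∃ k l : ℕ, ∀ n : ℕ, τ (k + n) = σ (l + n)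

/-- `σ` is a lift under `q` of a geodesic ray of `T` representing the same end
as `τ`. -/
def IsLiftOfEnd {W V : Type*} (S : SimpleGraph W) (T : SimpleGraph V)
    (q : W → V) (τ : ℕ → V) (σ : ℕ → W) : Prop :=
  IsGeodRay S σ ∧ IsGeodRay T (fun n => q (σ n)) ∧ RayEquiv (fun n => q (σ n)) τ

/-- `p` lies in the horoball `HB_r(τ)`: the Busemann function
`β_τ(p) = lim_n (n - d(τ(n), p))` (limit of a nondecreasing sequence) is at
least `r`. -/
def InHoroball {V : Type*} (T : SimpleGraph V) (τ : ℕ → V) (r : ℝ) (p : V) : Prop :=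
  ∃ n : ℕ, r ≤ (n : ℝ) - (T.dist (τ n) p : ℝ)

namespace SimpleGraph

variable {V : Type*} {G : SimpleGraph V}

def seqWalk (f : ℕ → V) (h : ∀ n, G.Adj (f n) (f (n + 1))) : (n : ℕ) → G.Walk (f 0) (f n)
  | 0 => .nil
  | n + 1 => (seqWalk f h n).concat (h n)

section seqWalk

variable {f : ℕ → V} (h : ∀ n, G.Adj (f n) (f (n + 1)))

lemma length_seqWalk (n : ℕ) : (seqWalk f h n).length = n := by
  induction n with
  | zero => rfl
  | succ n ih => simp [seqWalk, ih]

lemma support_seqWalk (n : ℕ) : (seqWalk f h n).support = (List.range (n + 1)).map f := by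
  induction n with
  | zero => rfl
  | succ n ih => simp [seqWalk, Walk.support_concat, ih, List.range_succ]

lemma exists_eq_of_mem_support_seqWalk {n : ℕ} {x : V} (hx : x ∈ (seqWalk f h n).support) :
    ∃ i, f i = x := by
  obtain ⟨i, -, rfl⟩ := List.mem_map.mp ((support_seqWalk h n) ▸ hx)
  exact ⟨i, rfl⟩

end seqWalk

lemma dist_le_of_adj_seq {f : ℕ → V} (h : ∀ n, G.Adj (f n) (f (n + 1))) (i k : ℕ) :
    G.dist (f i) (f (i + k)) ≤ k := by
  simpa [length_seqWalk] using dist_le (seqWalk _ (fun n => h (i + n)) k)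

lemma IsAcyclic.length_eq_dist_of_isPath (hG : G.IsAcyclic) {u v : V} {p : G.Walk u v}
    (hp : p.IsPath) : p.length = G.dist u v := by
  obtain ⟨p₀, hp₀, hl⟩ := p.reachable.exists_path_of_dist
  have hunique : (⟨p, hp⟩ : G.Path u v) = ⟨p₀, hp₀⟩ := (hG.subsingleton_path u v).elim _ _
  rw [← hl, congrArg (fun p : G.Path u v => p.1.length) hunique]

lemma IsAcyclic.dist_eq_of_adj_seq (hG : G.IsAcyclic) {f : ℕ → V}
    (h : ∀ n, G.Adj (f n) (f (n + 1))) (hf : Function.Injective f) (i k : ℕ) :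
    G.dist (f i) (f (i + k)) = k := by
  have hp : (seqWalk _ (fun n => h (i + n)) k).IsPath := by
    rw [Walk.isPath_def, support_seqWalk]
    exact List.nodup_range.map fun a b hab => by simpa using hf hab
  exact (hG.length_eq_dist_of_isPath hp).symm.trans (length_seqWalk _ k)

lemma IsTree.mem_support_of_dist_add_dist_eq (hG : G.IsTree) {a b x : V} (p : G.Walk a b)
    (hx : G.dist a x + G.dist x b = G.dist a b) : x ∈ p.support := by
  classical
  obtain ⟨p₁, -, h₁⟩ := hG.connected.exists_path_of_dist a x
  obtain ⟨p₂, -, h₂⟩ := hG.connected.exists_path_of_dist x b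
  have hpath : (p₁.append p₂).IsPath :=
    Walk.isPath_of_length_eq_dist _ (by rw [Walk.length_append]; omega)
  refine p.support_bypass_subset_support ?_
  rw [(hG.existsUnique_path a b).unique p.bypass_isPath hpath, Walk.mem_support_append_iff]
  exact Or.inl p₁.end_mem_support

lemma Walk.exists_adj_seq_extend {u v : V} (p : G.Walk u v) {f : ℕ → V} (hf₀ : f 0 = v)
    (h : ∀ n, G.Adj (f n) (f (n + 1))) :
    ∃ g : ℕ → V, g 0 = u ∧ (∀ n, G.Adj (g n) (g (n + 1))) ∧ ∀ m, g (p.length + m) = f m := by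
  induction p with
  | nil => exact ⟨f, hf₀, h, by simp⟩
  | @cons u w v hadj p ih =>
    obtain ⟨g, hg₀, hg, hgf⟩ := ih hf₀
    refine ⟨fun | 0 => u | n + 1 => g n, rfl, ?_, fun m => ?_⟩
    · rintro (_ | n)
      · simpa [hg₀] using hadj
      · exact hg n
    · simpa [Nat.add_right_comm] using hgf m

end SimpleGraph

open SimpleGraph

section Horoball

variable {V : Type*} {T : SimpleGraph V} {τ : ℕ → V}

lemma IsGeodRay.dist_eq (hT : T.IsAcyclic) (hτ : IsGeodRay T τ) (i k : ℕ) :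
    T.dist (τ i) (τ (i + k)) = k :=
  hT.dist_eq_of_adj_seq hτ.1 hτ.2 i k

lemma IsGeodRay.exists_forall_sub_dist_le (hT : T.IsTree) (hτ : IsGeodRay T τ) (v : V) :
    ∃ N : ℕ, ∀ m : ℕ, (m : ℤ) - T.dist (τ m) v ≤ N - T.dist (τ N) v := by
  obtain ⟨_, ⟨N, rfl⟩, hN⟩ := Int.exists_greatest_of_bdd
    (P := (· ∈ Set.range fun m : ℕ => (m : ℤ) - T.dist (τ m) v))
    ⟨T.dist (τ 0) v, by
      rintro _ ⟨m, rfl⟩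
      dsimp only
      have h₁ := hτ.dist_eq hT.isAcyclic 0 m
      have h₂ : T.dist (τ 0) (τ m) ≤ T.dist (τ 0) v + T.dist v (τ m) :=
        hT.connected.dist_triangle
      rw [zero_add] at h₁
      rw [SimpleGraph.dist_comm (u := v)] at h₂
      omega⟩
    ⟨_, 0, rfl⟩
  exact ⟨N, fun m => hN _ ⟨m, rfl⟩⟩

lemma IsGeodRay.exists_isGeodRay_inHoroball (hT : T.IsTree) (hτ : IsGeodRay T τ) {r : ℝ} {v : V}
    (hv : InHoroball T τ r v) :
    ∃ ρ : ℕ → V, ρ 0 = v ∧ IsGeodRay T ρ ∧ RayEquiv ρ τ ∧ ∀ i, InHoroball T τ r (ρ i) := by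
  obtain ⟨N, hN⟩ := hτ.exists_forall_sub_dist_le hT v
  set L := T.dist (τ N) v
  have hrN : r ≤ (N : ℝ) - L := by
    obtain ⟨n, hn⟩ := hv
    have := (Int.cast_le (R := ℝ)).mpr (hN n)
    push_cast at this
    linarith
  have hgrow : ∀ m, T.dist v (τ (N + m)) = L + m := by
    intro m
    have h₁ := hN (N + m)
    have h₂ : T.dist v (τ (N + m)) ≤ L + m :=
      calc _ ≤ T.dist v (τ N) + T.dist (τ N) (τ (N + m)) := hT.connected.dist_triangle
        _ = L + m := by rw [SimpleGraph.dist_comm, hτ.dist_eq hT.isAcyclic]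
    rw [SimpleGraph.dist_comm (u := τ (N + m))] at h₁
    push_cast at h₁
    omega
  obtain ⟨p, hp⟩ := hT.connected.exists_walk_length_eq_dist v (τ N)
  replace hp : p.length = L := hp.trans SimpleGraph.dist_comm
  obtain ⟨ρ, hρ₀, hρ, hρτ⟩ :=
    p.exists_adj_seq_extend (f := fun m => τ (N + m)) rfl fun m => hτ.1 (N + m)
  have hclose : ∀ i, T.dist (ρ i) (τ (N + i)) ≤ L := fun i => by
    have := dist_le_of_adj_seq hρ i p.length
    rwa [add_comm i, hρτ, hp] at this
  have hdist : ∀ i, T.dist v (ρ i) = i := fun i => by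
    have h₁ := dist_le_of_adj_seq hρ 0 i
    have h₂ : T.dist v (τ (N + i)) ≤ T.dist v (ρ i) + T.dist (ρ i) (τ (N + i)) :=
      hT.connected.dist_triangle
    rw [hρ₀, zero_add] at h₁
    have := hgrow i
    have := hclose i
    omega
  refine ⟨ρ, hρ₀, ⟨hρ, fun i j hij => by rw [← hdist i, hij, hdist j]⟩, ⟨p.length, N, hρτ⟩,
    fun i => ⟨N + i, ?_⟩⟩
  have : (T.dist (τ (N + i)) (ρ i) : ℝ) ≤ L := by
    exact_mod_cast SimpleGraph.dist_comm.trans_le (hclose i)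
  push_cast
  linarith

end Horoball

section Lift

variable {W V : Type*} {S : SimpleGraph W} {T : SimpleGraph V} {q : W → V}

lemma exists_adj_seq_lift
    (hlocsurj : ∀ (w : W) (v' : V), T.Adj (q w) v' → ∃ w' : W, S.Adj w w' ∧ q w' = v')
    {ρ : ℕ → V} (hρ : ∀ n, T.Adj (ρ n) (ρ (n + 1))) {w : W} (hw : q w = ρ 0) :
    ∃ σ : ℕ → W, σ 0 = w ∧ (∀ n, q (σ n) = ρ n) ∧ ∀ n, S.Adj (σ n) (σ (n + 1)) := by
  have hstep : ∀ w v', ∃ w', T.Adj (q w) v' → S.Adj w w' ∧ q w' = v' := fun w v' => by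
    by_cases h : T.Adj (q w) v'
    · exact (hlocsurj w v' h).imp fun _ hw' _ => hw'
    · exact ⟨w, fun h' => absurd h' h⟩
  choose next hnext using hstep
  let σ : ℕ → W := fun n => Nat.rec w (fun n s => next s (ρ (n + 1))) n
  have hσ : ∀ n, q (σ n) = ρ n := by
    intro n
    induction n with
    | zero => exact hw
    | succ n ih => exact (hnext _ _ (ih ▸ hρ n)).2
  exact ⟨σ, rfl, hσ, fun n => (hnext _ _ ((hσ n).symm ▸ hρ n)).1⟩

lemma exists_isLiftOfEnd_inHoroball (hT : T.IsTree)
    (hlocsurj : ∀ (w : W) (v' : V), T.Adj (q w) v' → ∃ w' : W, S.Adj w w' ∧ q w' = v')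
    {τ : ℕ → V} (hτ : IsGeodRay T τ) {r : ℝ} {w : W} (hw : InHoroball T τ r (q w)) :
    ∃ σ : ℕ → W, σ 0 = w ∧ IsLiftOfEnd S T q τ σ ∧ ∀ n, InHoroball T τ r (q (σ n)) := by
  obtain ⟨ρ, hρ₀, hρ, hρτ, hρr⟩ := hτ.exists_isGeodRay_inHoroball hT hw
  obtain ⟨σ, hσ₀, hqσ, hσ⟩ := exists_adj_seq_lift hlocsurj hρ.1 hρ₀.symm
  have hqσ' : (fun n => q (σ n)) = ρ := funext hqσ
  refine ⟨σ, hσ₀, ⟨⟨hσ, fun i j hij => hρ.2 ?_⟩, hqσ' ▸ hρ, hqσ' ▸ hρτ⟩, fun n => hqσ n ▸ hρr n⟩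
  rw [← hqσ, ← hqσ, hij]

end Lift

theorem stmt12_general {W V : Type*} (S : SimpleGraph W) (T : SimpleGraph V)
    (hS : S.IsTree) (hT : T.IsTree)
    (q : W → V)
    (hlocsurj : ∀ (w : W) (v' : V), T.Adj (q w) v' → ∃ w' : W, S.Adj w w' ∧ q w' = v')
    (τ : ℕ → V) (hτ : IsGeodRay T τ)
    (hsingleton : (∃ σ : ℕ → W, IsLiftOfEnd S T q τ σ) ∧
      ∀ σ₁ σ₂ : ℕ → W, IsLiftOfEnd S T q τ σ₁ → IsLiftOfEnd S T q τ σ₂ →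
        RayEquiv σ₁ σ₂)
    (r : ℝ) :
    ∀ w₁ w₂ x : W, InHoroball T τ r (q w₁) → InHoroball T τ r (q w₂) →
      S.dist w₁ x + S.dist x w₂ = S.dist w₁ w₂ →
      InHoroball T τ r (q x) := by
  intro w₁ w₂ x h₁ h₂ hx
  obtain ⟨σ₁, rfl, hσ₁, hr₁⟩ := exists_isLiftOfEnd_inHoroball hT hlocsurj hτ h₁
  obtain ⟨σ₂, rfl, hσ₂, hr₂⟩ := exists_isLiftOfEnd_inHoroball hT hlocsurj hτ h₂
  obtain ⟨k, l, hkl⟩ := hsingleton.2 σ₁ σ₂ hσ₁ hσ₂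
  have hmeet : σ₁ k = σ₂ l := by simpa using hkl 0
  have hmem := hS.mem_support_of_dist_add_dist_eq
    (((seqWalk σ₁ hσ₁.1.1 k).copy rfl hmeet).append (seqWalk σ₂ hσ₂.1.1 l).reverse) hx
  rw [Walk.mem_support_append_iff, Walk.support_copy, Walk.support_reverse,
    List.mem_reverse] at hmem
  rcases hmem with hm | hm
  · obtain ⟨i, rfl⟩ := exists_eq_of_mem_support_seqWalk _ hm
    exact hr₁ i
  · obtain ⟨i, rfl⟩ := exists_eq_of_mem_support_seqWalk _ hm
    exact hr₂ i

/-- Let `q : T̃ → T` be a locally surjective morphism of trees,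
`E` an end of `T` (represented by the geodesic ray `τ`) with `q⁻¹(E)` a
singleton, and `r ∈ ℝ`.  Then the preimage `q⁻¹(HB_r(τ))` is a connected
subtree of `T̃`, i.e. a convex set of vertices. -/
theorem stmt12 {W V : Type*} (S : SimpleGraph W) (T : SimpleGraph V)
    (hS : S.IsTree) (hT : T.IsTree) (hlf : T.LocallyFinite)
    (q : W → V) (hq : ∀ a b : W, S.Adj a b → T.Adj (q a) (q b))
    (hlocsurj : ∀ (w : W) (v' : V), T.Adj (q w) v' → ∃ w' : W, S.Adj w w' ∧ q w' = v')
    (τ : ℕ → V) (hτ : IsGeodRay T τ)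
    (hsingleton : (∃ σ : ℕ → W, IsLiftOfEnd S T q τ σ) ∧
      ∀ σ₁ σ₂ : ℕ → W, IsLiftOfEnd S T q τ σ₁ → IsLiftOfEnd S T q τ σ₂ →
        RayEquiv σ₁ σ₂)
    (r : ℝ) :
    ∀ w₁ w₂ x : W, InHoroball T τ r (q w₁) → InHoroball T τ r (q w₂) →
      S.dist w₁ x + S.dist x w₂ = S.dist w₁ w₂ →
      InHoroball T τ r (q x) :=
  stmt12_general S T hS hT q hlocsurj τ hτ hsingleton r
end
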